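/- arXiv:2106.12294 — 4 statements merged into one kernel-verified Lean document; each statement's English description precedes it below -/
import Mathlib

section
/- Let (x,λ) be a solution of (PD-AVD) and let (z,μ) ∈ X × Y with Az = b. Then for every t ≥ t₀ one has d/dt E_{z,μ}(t) ≤ (2θ − 1)·θt·G_β(t | z,μ) − (βθt/2)·‖Ax(t) − b‖² − ξθt·‖(ẋ(t), λ̇(t))‖². -/
open Set MeasureTheory Filter Topology
open scoped RealInnerProductSpace ENNReal

/-- The augmented Lagrangian `L_β(x,λ) = f(x) + ⟪λ, Ax − b⟫ + (β/2)‖Ax − b‖²`. -/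
noncomputable def augLagrangian {X Y : Type*}
    [NormedAddCommGroup X] [InnerProductSpace ℝ X]
    [NormedAddCommGroup Y] [InnerProductSpace ℝ Y]
    (f : X → ℝ) (A : X →L[ℝ] Y) (b : Y) (β : ℝ) (u : X) (μ : Y) : ℝ :=
  f u + ⟪μ, A u - b⟫ + β / 2 * ‖A u - b‖ ^ 2

/-- The energy function `E_{z,μ}(t)` associated to a trajectory `(x,λ)` with velocities
`(x',λ')`, where the product norm on `X × Y` is the Hilbert norm
`‖(u,v)‖² = ‖u‖² + ‖v‖²` and `ξ = θα − θ − 1`. -/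
noncomputable def pdEnergy {X Y : Type*}
    [NormedAddCommGroup X] [InnerProductSpace ℝ X]
    [NormedAddCommGroup Y] [InnerProductSpace ℝ Y]
    (f : X → ℝ) (A : X →L[ℝ] Y) (b : Y) (α β θ : ℝ)
    (x : ℝ → X) (x' : ℝ → X) (l : ℝ → Y) (l' : ℝ → Y)
    (z : X) (μ : Y) (t : ℝ) : ℝ :=
  θ ^ 2 * t ^ 2 *
      (augLagrangian f A b β (x t) μ - augLagrangian f A b β z (l t))
    + 1 / 2 * (‖x t - z + (θ * t) • x' t‖ ^ 2 + ‖l t - μ + (θ * t) • l' t‖ ^ 2)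
    + (θ * α - θ - 1) / 2 * (‖x t - z‖ ^ 2 + ‖l t - μ‖ ^ 2)

/-!
Differentiating `E` and substituting both equations of the system, the coupling terms
`⟪λ + θ t λ̇, A (x − z + θ t ẋ)⟫` contributed by the primal and by the dual equation cancel by
adjointness (using `A z = b`), which leaves the exact identity
`Ė = 2 θ² t G − θ t ⟪∇ₓ L_β(x, μ), x − z⟫ − ξ θ t ‖(ẋ, λ̇)‖²`.
Convexity of `f` and `A z = b` give `⟪∇ₓ L_β(x, μ), x − z⟫ ≥ G + (β/2) ‖A x − b‖²`, which turns
the identity into the claimed bound.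
-/

open ContinuousLinearMap (adjoint)

theorem HasGradientAt.comp_hasDerivAt {X : Type*} [NormedAddCommGroup X] [InnerProductSpace ℝ X]
    [CompleteSpace X] {f : X → ℝ} {g : X} {x : ℝ → X} {v : X} {t : ℝ}
    (hf : HasGradientAt f g (x t)) (hx : HasDerivAt x v t) :
    HasDerivAt (fun s => f (x s)) ⟪g, v⟫ t := by
  simpa [Function.comp_def] using hf.hasFDerivAt.comp_hasDerivAt t hx

theorem ConvexOn.add_inner_le_of_hasGradientAt {X : Type*} [NormedAddCommGroup X]
    [InnerProductSpace ℝ X] [CompleteSpace X] {f : X → ℝ} (hf : ConvexOn ℝ univ f) {u g : X}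
    (hg : HasGradientAt f g u) (w : X) :
    f u + ⟪g, w - u⟫ ≤ f w := by
  have hline : HasDerivAt (f ∘ AffineMap.lineMap u w) ⟪g, w - u⟫ (0 : ℝ) :=
    HasGradientAt.comp_hasDerivAt (x := AffineMap.lineMap (k := ℝ) u w)
      (by rwa [AffineMap.lineMap_apply_zero]) AffineMap.hasDerivAt_lineMap
  have := (hf.comp_affineMap (AffineMap.lineMap (k := ℝ) u w)).le_slope_of_hasDerivAt
    (mem_univ 0) (mem_univ 1) zero_lt_one hline
  simp only [slope_def_field, Function.comp_apply, AffineMap.lineMap_apply_one,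
    AffineMap.lineMap_apply_zero, sub_zero, div_one] at this
  linarith

section AugmentedLagrangian

variable {X Y : Type*} [NormedAddCommGroup X] [InnerProductSpace ℝ X]
  [NormedAddCommGroup Y] [InnerProductSpace ℝ Y] {f : X → ℝ} {A : X →L[ℝ] Y} {b : Y} {β : ℝ}

theorem augLagrangian_of_apply_eq {z : X} (hz : A z = b) (μ : Y) :
    augLagrangian f A b β z μ = f z := by
  simp [augLagrangian, hz]

theorem HasGradientAt.hasDerivAt_augLagrangian [CompleteSpace X] [CompleteSpace Y]
    {x : ℝ → X} {v : X} {t : ℝ} {g : X} (hg : HasGradientAt f g (x t)) (hx : HasDerivAt x v t)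
    (μ : Y) :
    HasDerivAt (fun s => augLagrangian f A b β (x s) μ)
      ⟪g + adjoint A (μ + β • (A (x t) - b)), v⟫ t := by
  have hAx : HasDerivAt (fun s => A (x s) - b) (A v) t :=
    (A.hasFDerivAt.comp_hasDerivAt t hx).sub_const b
  refine (((hg.comp_hasDerivAt hx).add ((hasDerivAt_const t μ).inner ℝ hAx)).add
    (hAx.norm_sq.const_mul (β / 2))).congr_deriv ?_
  simp only [inner_add_left, ContinuousLinearMap.adjoint_inner_left,
    real_inner_smul_left, inner_zero_left]
  ring

theorem ConvexOn.augLagrangian_sub_le_inner [CompleteSpace X] [CompleteSpace Y]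
    (hf : ConvexOn ℝ univ f) {u g z : X} (hg : HasGradientAt f g u) (hz : A z = b) (μ : Y) (ν : Y) :
    augLagrangian f A b β u μ - augLagrangian f A b β z ν + β / 2 * ‖A u - b‖ ^ 2
      ≤ ⟪g + adjoint A (μ + β • (A u - b)), u - z⟫ := by
  have hAuz : A (u - z) = A u - b := by rw [map_sub, hz]
  have := hf.add_inner_le_of_hasGradientAt hg z
  rw [augLagrangian_of_apply_eq hz, augLagrangian, inner_add_left,
    ContinuousLinearMap.adjoint_inner_left, hAuz, inner_add_left, real_inner_smul_left,
    real_inner_self_eq_norm_sq, ← neg_sub u z, inner_neg_right] at *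
  linarith

end AugmentedLagrangian

-- `(1 + θ) ẇ + θ t ẅ` is the derivative of `w - w⋆ + θ t ẇ`.
theorem smul_add_smul_of_damped_eq_zero {E : Type*} [AddCommGroup E] [Module ℝ E]
    {α θ t : ℝ} (ht : t ≠ 0) {v a g : E} (h : a + (α / t) • v + g = 0) :
    (1 + θ) • v + (θ * t) • a = -(θ * α - θ - 1) • v - (θ * t) • g := by
  linear_combination (norm := skip) (θ * t) • h
  match_scalars <;> field_simp <;> ring

section Energy

variable {X Y : Type*} [NormedAddCommGroup X] [InnerProductSpace ℝ X] [CompleteSpace X]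
  [NormedAddCommGroup Y] [InnerProductSpace ℝ Y] [CompleteSpace Y]
  {f : X → ℝ} {f' : X → X} {A : X →L[ℝ] Y} {b : Y} {α β θ : ℝ}
  {x x' : ℝ → X} {l l' : ℝ → Y} {z : X} {μ : Y} {t : ℝ}

theorem hasDerivAt_pdEnergy (hz : A z = b) {g : X} (hg : HasGradientAt f g (x t))
    {a : X} {c : Y} (hx : HasDerivAt x (x' t) t) (hx' : HasDerivAt x' a t)
    (hl : HasDerivAt l (l' t) t) (hl' : HasDerivAt l' c t) :
    HasDerivAt (pdEnergy f A b α β θ x x' l l' z μ)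
      (θ ^ 2 * (2 * t * (augLagrangian f A b β (x t) μ - augLagrangian f A b β z (l t))
          + t ^ 2 * ⟪g + adjoint A (μ + β • (A (x t) - b)), x' t⟫)
        + (⟪x t - z + (θ * t) • x' t, (1 + θ) • x' t + (θ * t) • a⟫
          + ⟪l t - μ + (θ * t) • l' t, (1 + θ) • l' t + (θ * t) • c⟫)
        + (θ * α - θ - 1) * (⟪x t - z, x' t⟫ + ⟪l t - μ, l' t⟫)) t := by
  have hvx : HasDerivAt (fun s => x s - z + (θ * s) • x' s) ((1 + θ) • x' t + (θ * t) • a) t :=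
    ((hx.sub_const z).add (((hasDerivAt_id' t).const_mul θ).smul hx')).congr_deriv (by module)
  have hvl : HasDerivAt (fun s => l s - μ + (θ * s) • l' s) ((1 + θ) • l' t + (θ * t) • c) t :=
    ((hl.sub_const μ).add (((hasDerivAt_id' t).const_mul θ).smul hl')).congr_deriv (by module)
  have hE : pdEnergy f A b α β θ x x' l l' z μ = fun s =>
      θ ^ 2 * s ^ 2 * (augLagrangian f A b β (x s) μ - f z)
        + 1 / 2 * (‖x s - z + (θ * s) • x' s‖ ^ 2 + ‖l s - μ + (θ * s) • l' s‖ ^ 2)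
        + (θ * α - θ - 1) / 2 * (‖x s - z‖ ^ 2 + ‖l s - μ‖ ^ 2) := by
    funext s
    simp only [pdEnergy, augLagrangian_of_apply_eq hz]
  rw [hE, augLagrangian_of_apply_eq hz]
  refine (((((hasDerivAt_pow 2 t).const_mul (θ ^ 2)).mul
    ((hg.hasDerivAt_augLagrangian hx μ).sub_const (f z))).add
    ((hvx.norm_sq.add hvl.norm_sq).const_mul (1 / 2))).add
    (((hx.sub_const z).norm_sq.add (hl.sub_const μ).norm_sq).const_mul
      ((θ * α - θ - 1) / 2))).congr_deriv ?_
  norm_num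
  ring

theorem hasDerivAt_pdEnergy_of_ode (hz : A z = b) (ht : t ≠ 0)
    (hg : HasGradientAt f (f' (x t)) (x t)) {x'' : ℝ → X} {l'' : ℝ → Y}
    (hx : HasDerivAt x (x' t) t) (hx' : HasDerivAt x' (x'' t) t)
    (hl : HasDerivAt l (l' t) t) (hl' : HasDerivAt l' (l'' t) t)
    (hode₁ : x'' t + (α / t) • x' t + f' (x t) + adjoint A (l t + (θ * t) • l' t)
        + β • adjoint A (A (x t) - b) = 0)
    (hode₂ : l'' t + (α / t) • l' t - (A (x t + (θ * t) • x' t) - b) = 0) :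
    HasDerivAt (pdEnergy f A b α β θ x x' l l' z μ)
      (2 * θ ^ 2 * t * (augLagrangian f A b β (x t) μ - augLagrangian f A b β z (l t))
        - θ * t * ⟪f' (x t) + adjoint A (μ + β • (A (x t) - b)), x t - z⟫
        - (θ * α - θ - 1) * θ * t * (‖x' t‖ ^ 2 + ‖l' t‖ ^ 2)) t := by
  have hAv : A (x t + (θ * t) • x' t) - b = A (x t - z + (θ * t) • x' t) := by
    rw [← hz, ← map_sub, sub_add_eq_add_sub]
  have hvx : (1 + θ) • x' t + (θ * t) • x'' t = -(θ * α - θ - 1) • x' t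
      - (θ * t) • (f' (x t) + adjoint A (l t + (θ * t) • l' t) + β • adjoint A (A (x t) - b)) :=
    smul_add_smul_of_damped_eq_zero ht (by rw [← hode₁]; abel)
  have hvl : (1 + θ) • l' t + (θ * t) • l'' t = -(θ * α - θ - 1) • l' t
      - (θ * t) • -A (x t - z + (θ * t) • x' t) :=
    smul_add_smul_of_damped_eq_zero ht (by rw [← hAv, ← sub_eq_add_neg]; exact hode₂)
  refine (hasDerivAt_pdEnergy hz hg hx hx' hl hl').congr_deriv ?_
  rw [hvx, hvl]
  simp only [map_add, map_sub, map_smul, hz, inner_add_left, inner_add_right,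
    inner_sub_left, inner_sub_right, inner_neg_right, real_inner_smul_left,
    real_inner_smul_right, ContinuousLinearMap.adjoint_inner_left,
    ContinuousLinearMap.adjoint_inner_right, real_inner_self_eq_norm_sq, neg_smul]
  simp only [real_inner_comm]
  ring

end Energy

theorem stmt0_general
    {X Y : Type*}
    [NormedAddCommGroup X] [InnerProductSpace ℝ X] [CompleteSpace X]
    [NormedAddCommGroup Y] [InnerProductSpace ℝ Y] [CompleteSpace Y]
    (f : X → ℝ) (f' : X → X) (A : X →L[ℝ] Y) (b : Y)
    (hconv : ConvexOn ℝ univ f)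
    (hgrad : ∀ u, HasGradientAt f (f' u) u)
    (t₀ α β θ : ℝ) (ht₀ : 0 < t₀) (hα : 3 ≤ α)
    (hθ1 : 1 / (α - 1) ≤ θ)
    (x : ℝ → X) (x' x'' : ℝ → X) (l : ℝ → Y) (l' l'' : ℝ → Y)
    (hx1 : ∀ t ∈ Ici t₀, HasDerivAt x (x' t) t)
    (hx2 : ∀ t ∈ Ici t₀, HasDerivAt x' (x'' t) t)
    (hl1 : ∀ t ∈ Ici t₀, HasDerivAt l (l' t) t)
    (hl2 : ∀ t ∈ Ici t₀, HasDerivAt l' (l'' t) t)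
    (hode1 : ∀ t ∈ Ici t₀, x'' t + (α / t) • x' t + f' (x t)
        + (ContinuousLinearMap.adjoint A) (l t + (θ * t) • l' t)
        + β • (ContinuousLinearMap.adjoint A) (A (x t) - b) = 0)
    (hode2 : ∀ t ∈ Ici t₀, l'' t + (α / t) • l' t
        - (A (x t + (θ * t) • x' t) - b) = 0)
    (z : X) (μ : Y) (hz : A z = b) :
    ∀ t ∈ Ici t₀, ∃ d : ℝ,
      HasDerivAt (pdEnergy f A b α β θ x x' l l' z μ) d t ∧
      d ≤ (2 * θ - 1) * θ * t *
            (augLagrangian f A b β (x t) μ - augLagrangian f A b β z (l t))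
          - β * θ * t / 2 * ‖A (x t) - b‖ ^ 2
          - (θ * α - θ - 1) * θ * t * (‖x' t‖ ^ 2 + ‖l' t‖ ^ 2) := by
  intro t ht
  have htpos : 0 < t := ht₀.trans_le ht
  have hθpos : 0 < θ := (one_div_pos.2 (by linarith)).trans_le hθ1
  refine ⟨_, hasDerivAt_pdEnergy_of_ode hz htpos.ne' (hgrad (x t)) (hx1 t ht) (hx2 t ht)
    (hl1 t ht) (hl2 t ht) (hode1 t ht) (hode2 t ht), ?_⟩
  have hkey := hconv.augLagrangian_sub_le_inner (A := A) (β := β) (hgrad (x t)) hz μ (l t)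
  linarith [mul_le_mul_of_nonneg_left hkey (mul_pos hθpos htpos).le]

theorem stmt0
    {X Y : Type*}
    [NormedAddCommGroup X] [InnerProductSpace ℝ X] [CompleteSpace X]
    [NormedAddCommGroup Y] [InnerProductSpace ℝ Y] [CompleteSpace Y]
    (f : X → ℝ) (f' : X → X) (A : X →L[ℝ] Y) (b : Y)
    (hconv : ConvexOn ℝ univ f)
    (hgrad : ∀ u, HasGradientAt f (f' u) u)
    (hf'cont : Continuous f')
    (t₀ α β θ : ℝ) (ht₀ : 0 < t₀) (hα : 3 ≤ α) (hβ : 0 ≤ β)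
    (hθ1 : 1 / (α - 1) ≤ θ) (hθ2 : θ ≤ 1 / 2)
    (x : ℝ → X) (x' x'' : ℝ → X) (l : ℝ → Y) (l' l'' : ℝ → Y)
    (hx1 : ∀ t ∈ Ici t₀, HasDerivAt x (x' t) t)
    (hx2 : ∀ t ∈ Ici t₀, HasDerivAt x' (x'' t) t)
    (hx3 : ContinuousOn x'' (Ici t₀))
    (hl1 : ∀ t ∈ Ici t₀, HasDerivAt l (l' t) t)
    (hl2 : ∀ t ∈ Ici t₀, HasDerivAt l' (l'' t) t)
    (hl3 : ContinuousOn l'' (Ici t₀))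
    (hode1 : ∀ t ∈ Ici t₀, x'' t + (α / t) • x' t + f' (x t)
        + (ContinuousLinearMap.adjoint A) (l t + (θ * t) • l' t)
        + β • (ContinuousLinearMap.adjoint A) (A (x t) - b) = 0)
    (hode2 : ∀ t ∈ Ici t₀, l'' t + (α / t) • l' t
        - (A (x t + (θ * t) • x' t) - b) = 0)
    (z : X) (μ : Y) (hz : A z = b) :
    ∀ t ∈ Ici t₀, ∃ d : ℝ,
      HasDerivAt (pdEnergy f A b α β θ x x' l l' z μ) d t ∧
      d ≤ (2 * θ - 1) * θ * t *
            (augLagrangian f A b β (x t) μ - augLagrangian f A b β z (l t))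
          - β * θ * t / 2 * ‖A (x t) - b‖ ^ 2
          - (θ * α - θ - 1) * θ * t * (‖x' t‖ ^ 2 + ‖l' t‖ ^ 2) :=
  stmt0_general f f' A b hconv hgrad t₀ α β θ ht₀ hα hθ1 x x' x'' l l' l'' hx1 hx2 hl1 hl2 hode1
    hode2 z μ hz
end

section
/- Assume additionally that ∇f is ℓ-Lipschitz continuous for some ℓ > 0, that α > 3 and 1/2 > θ > 1/(α−1), and that there exists at least one primal-dual optimal solution. Then for every initial condition (x(t₀),λ(t₀)) = (x₀,λ₀) ∈ X × Y and (ẋ(t₀),λ̇(t₀)) = (ẋ₀,λ̇₀) ∈ X × Y, the dynamical system (PD-AVD) has a unique global twice continuously differentiable solution (x,λ) : [t₀,∞) → X × Y. -/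
open Set MeasureTheory Filter Topology
open scoped RealInnerProductSpace ENNReal

/-- `IsPDAVDSolution t₀ α β θ f' A b x l x' x'' l' l''` says that `(x,λ) = (x,l)` is a twice
continuously differentiable solution on `[t₀,∞)` of the dynamical system (PD-AVD), with first
and second derivative functions `x', x''` (for the primal trajectory) and `l', l''` (for the
dual trajectory). -/
def IsPDAVDSolution {X Y : Type*}
    [NormedAddCommGroup X] [InnerProductSpace ℝ X] [CompleteSpace X]
    [NormedAddCommGroup Y] [InnerProductSpace ℝ Y] [CompleteSpace Y]
    (t₀ α β θ : ℝ) (f' : X → X) (A : X →L[ℝ] Y) (b : Y)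
    (x : ℝ → X) (l : ℝ → Y) (x' x'' : ℝ → X) (l' l'' : ℝ → Y) : Prop :=
  (∀ t ∈ Ici t₀, HasDerivAt x (x' t) t) ∧
  (∀ t ∈ Ici t₀, HasDerivAt x' (x'' t) t) ∧
  ContinuousOn x'' (Ici t₀) ∧
  (∀ t ∈ Ici t₀, HasDerivAt l (l' t) t) ∧
  (∀ t ∈ Ici t₀, HasDerivAt l' (l'' t) t) ∧
  ContinuousOn l'' (Ici t₀) ∧
  (∀ t ∈ Ici t₀, x'' t + (α / t) • x' t + f' (x t)
      + (ContinuousLinearMap.adjoint A) (l t + (θ * t) • l' t)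
      + β • (ContinuousLinearMap.adjoint A) (A (x t) - b) = 0) ∧
  (∀ t ∈ Ici t₀, l'' t + (α / t) • l' t - (A (x t + (θ * t) • x' t) - b) = 0)

open scoped NNReal InnerProduct

/-!
In the state `(x, λ, ẋ, λ̇)`, (PD-AVD) is a first-order ODE whose vector field is globally
Lipschitz in the state, uniformly for `t` in bounded subintervals of `[t₀, ∞)`: the coefficients
`α / t` and `θ t` stay bounded there and `∇f` is Lipschitz. A globally Lipschitz field has a
solution on every compact interval: Gronwall's inequality confines any solution to a fixed ball,
and truncating the field radially outside that ball yields a bounded Lipschitz field to which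
Picard–Lindelöf applies on the whole interval. The solutions on `[t₀, t₀ + n]` agree by
uniqueness and glue to a solution on `[t₀, ∞)`; continuing it to the left of `t₀` by its tangent
line makes the derivatives at `t₀` two-sided. Uniqueness is Lipschitz uniqueness on each
`[t₀, t]`.
-/

section RadialRetraction

variable {E : Type*} [NormedAddCommGroup E] {M : ℝ}

lemma min_one_div_norm_mul_norm (hM : 0 ≤ M) (u : E) : min 1 (M / ‖u‖) * ‖u‖ = min ‖u‖ M := by
  rcases eq_or_ne u 0 with rfl | hu
  · simp [hM]
  · rw [min_mul_of_nonneg _ _ (norm_nonneg u), one_mul, div_mul_cancel₀ _ (norm_ne_zero_iff.2 hu)]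

variable [NormedSpace ℝ E]

noncomputable def radialRetraction (M : ℝ) (u : E) : E := min 1 (M / ‖u‖) • u

lemma norm_radialRetraction (hM : 0 ≤ M) (u : E) : ‖radialRetraction M u‖ = min ‖u‖ M := by
  rw [radialRetraction, norm_smul, Real.norm_of_nonneg (le_min zero_le_one (by positivity)),
    min_one_div_norm_mul_norm hM]

lemma radialRetraction_of_norm_le {u : E} (h : ‖u‖ ≤ M) : radialRetraction M u = u := by
  rcases eq_or_ne u 0 with rfl | hu
  · simp [radialRetraction]
  · rw [radialRetraction, min_eq_left ((one_le_div (norm_pos_iff.2 hu)).2 h), one_smul]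

lemma lipschitzWith_radialRetraction (hM : 0 ≤ M) :
    LipschitzWith 2 (radialRetraction M : E → E) := by
  refine LipschitzWith.of_dist_le_mul fun u w ↦ ?_
  wlog h : ‖w‖ ≤ ‖u‖ generalizing u w
  · rw [dist_comm, dist_comm u]; exact this w u (le_of_not_ge h)
  simp only [dist_eq_norm, NNReal.coe_ofNat]
  set s := min 1 (M / ‖u‖)
  set s' := min 1 (M / ‖w‖)
  have hs : 0 ≤ s := le_min zero_le_one (by positivity)
  have hs1 : s ≤ 1 := min_le_left _ _
  -- `s' ‖w‖ = min ‖w‖ M ≤ min ‖u‖ M = s ‖u‖`, and `s ≤ s'` unless `w = 0`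
  have hw : ‖(s - s') • w‖ ≤ s * (‖u‖ - ‖w‖) := by
    rcases eq_or_ne w 0 with rfl | hw0
    · simpa using mul_nonneg hs (norm_nonneg u)
    have hss' : s ≤ s' :=
      min_le_min_left 1 (div_le_div_of_nonneg_left hM (norm_pos_iff.2 hw0) h)
    have := min_le_min_right M h
    rw [← min_one_div_norm_mul_norm hM, ← min_one_div_norm_mul_norm hM] at this
    rw [norm_smul, Real.norm_eq_abs, abs_of_nonpos (by linarith)]
    linarith
  have hsplit : radialRetraction M u - radialRetraction M w = s • (u - w) + (s - s') • w := by
    simp only [radialRetraction, smul_sub, sub_smul, s, s']; abel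
  have := norm_sub_norm_le u w
  calc ‖radialRetraction M u - radialRetraction M w‖
      ≤ ‖s • (u - w)‖ + ‖(s - s') • w‖ := hsplit ▸ norm_add_le _ _
    _ ≤ s * ‖u - w‖ + s * (‖u‖ - ‖w‖) := by
        rw [norm_smul, Real.norm_of_nonneg hs]; gcongr
    _ ≤ 2 * ‖u - w‖ := by nlinarith [norm_nonneg (u - w)]

end RadialRetraction

section ProdDeriv

variable {𝕜 E F : Type*} [NontriviallyNormedField 𝕜] [NormedAddCommGroup E] [NormedSpace 𝕜 E]
  [NormedAddCommGroup F] [NormedSpace 𝕜 F] {f : 𝕜 → E × F} {p : E × F} {x : 𝕜}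

lemma HasDerivAt.fst (h : HasDerivAt f p x) : HasDerivAt (fun y ↦ (f y).1) p.1 x :=
  (hasFDerivAt_fst (p := f x)).comp_hasDerivAt x h

lemma HasDerivAt.snd (h : HasDerivAt f p x) : HasDerivAt (fun y ↦ (f y).2) p.2 x :=
  (hasFDerivAt_snd (p := f x)).comp_hasDerivAt x h

end ProdDeriv

section GlobalSolution

variable {E : Type*} [NormedAddCommGroup E] [NormedSpace ℝ E] {F : ℝ → E → E} {a b : ℝ}
  {K : ℝ≥0}

lemma ODE_solution_unique_of_hasDerivWithinAt_Icc (hF : ∀ t ∈ Icc a b, LipschitzWith K (F t))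
    {u w : ℝ → E} (hu : ∀ t ∈ Icc a b, HasDerivWithinAt u (F t (u t)) (Icc a b) t)
    (hw : ∀ t ∈ Icc a b, HasDerivWithinAt w (F t (w t)) (Icc a b) t) (ha : u a = w a) :
    EqOn u w (Icc a b) :=
  ODE_solution_unique_of_mem_Icc_right (s := fun _ ↦ univ)
    (fun t ht ↦ (hF t (Ico_subset_Icc_self ht)).lipschitzOnWith)
    (fun t ht ↦ (hu t ht).continuousWithinAt)
    (fun t ht ↦ (hu t (Ico_subset_Icc_self ht)).mono_of_mem_nhdsWithin
      (Icc_mem_nhdsGE_of_mem ht)) (fun _ _ ↦ mem_univ _)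
    (fun t ht ↦ (hw t ht).continuousWithinAt)
    (fun t ht ↦ (hw t (Ico_subset_Icc_self ht)).mono_of_mem_nhdsWithin
      (Icc_mem_nhdsGE_of_mem ht)) (fun _ _ ↦ mem_univ _) ha

lemma exists_hasDerivAt_of_hasDerivWithinAt_Ici {u v : ℝ → E}
    (h : ∀ t ∈ Ici a, HasDerivWithinAt u (v t) (Ici a) t) :
    ∃ w : ℝ → E, EqOn w u (Ici a) ∧ ∀ t ∈ Ici a, HasDerivAt w (v t) t := by
  set w : ℝ → E := fun t ↦ if a ≤ t then u t else u a + (t - a) • v a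
  have hwu : EqOn w u (Ici a) := fun t ht ↦ if_pos ht
  refine ⟨w, hwu, fun t ht ↦ ?_⟩
  have hright : HasDerivWithinAt w (v t) (Ici a) t :=
    (h t ht).congr hwu (hwu ht)
  rcases (mem_Ici.1 ht).eq_or_lt with rfl | hlt
  · have hleft : HasDerivWithinAt w (v a) (Iic a) a := by
      have : HasDerivAt (fun s ↦ u a + (s - a) • v a) (v a) a := by
        simpa using ((hasDerivAt_id a).sub_const a).smul_const (v a) |>.const_add (u a)
      refine this.hasDerivWithinAt.congr (fun s hs ↦ ?_) (by simp [w])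
      rcases (mem_Iic.1 hs).eq_or_lt with rfl | hs
      · simp [w]
      · simp [w, not_le.2 hs]
    simpa using hleft.union hright
  · exact hright.hasDerivAt (Ici_mem_nhds hlt)

variable [CompleteSpace E]

lemma exists_hasDerivWithinAt_Icc_of_norm_le (hab : a ≤ b)
    (hF : ∀ t ∈ Icc a b, LipschitzWith K (F t)) (hFt : ∀ x, ContinuousOn (F · x) (Icc a b))
    {L : ℝ} (hL : ∀ t ∈ Icc a b, ∀ x, ‖F t x‖ ≤ L) (x₀ : E) :
    ∃ u : ℝ → E, u a = x₀ ∧ ∀ t ∈ Icc a b, HasDerivWithinAt u (F t (u t)) (Icc a b) t := by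
  have hpl : IsPicardLindelof F ⟨a, left_mem_Icc.2 hab⟩ x₀ (L.toNNReal * (b - a).toNNReal) 0
      L.toNNReal K :=
    { lipschitzOnWith := fun t ht ↦ (hF t ht).lipschitzOnWith
      continuousOn := fun x _ ↦ hFt x
      norm_le := fun t ht x _ ↦ (hL t ht x).trans (Real.le_coe_toNNReal L)
      mul_max_le := by simp [Real.coe_toNNReal _ (sub_nonneg.2 hab), sub_nonneg.2 hab] }
  exact hpl.exists_eq_forall_mem_Icc_hasDerivWithinAt₀

lemma exists_hasDerivWithinAt_Icc_of_lipschitzWith (hab : a ≤ b)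
    (hF : ∀ t ∈ Icc a b, LipschitzWith K (F t)) (hFt : ∀ x, ContinuousOn (F · x) (Icc a b))
    (x₀ : E) :
    ∃ u : ℝ → E, u a = x₀ ∧ ∀ t ∈ Icc a b, HasDerivWithinAt u (F t (u t)) (Icc a b) t := by
  obtain ⟨B, hB⟩ := isCompact_Icc.exists_bound_of_continuousOn (hFt x₀)
  have hB₀ : 0 ≤ B := (norm_nonneg _).trans (hB a (left_mem_Icc.2 hab))
  have hgrowth : ∀ t ∈ Icc a b, ∀ x, ‖F t x‖ ≤ K * ‖x - x₀‖ + B := fun t ht x ↦ by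
    have := (hF t ht).norm_sub_le x x₀
    have := norm_le_insert' (F t x) (F t x₀)
    linarith [hB t ht]
  -- Gronwall bounds `‖u t - x₀‖` by `M` for any solution `u`, so truncating `F` outside
  -- `closedBall x₀ M` changes nothing along `u` but makes the field bounded.
  set M := gronwallBound 0 K B (b - a)
  have hM : 0 ≤ M := by
    simpa [gronwallBound_x0] using gronwallBound_mono le_rfl hB₀ K.2 (sub_nonneg.2 hab)
  set G : ℝ → E → E := fun t x ↦ F t (x₀ + radialRetraction M (x - x₀))
  have hG : ∀ t ∈ Icc a b, LipschitzWith (K * 2) (G t) := fun t ht ↦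
    (hF t ht).comp <| by
      simpa using (LipschitzWith.const x₀).add
        ((lipschitzWith_radialRetraction hM).comp (LipschitzWith.id.sub (LipschitzWith.const x₀)))
  have hGgrowth : ∀ t ∈ Icc a b, ∀ x, ‖G t x‖ ≤ K * min ‖x - x₀‖ M + B := fun t ht x ↦ by
    simpa [norm_radialRetraction hM] using hgrowth t ht (x₀ + radialRetraction M (x - x₀))
  obtain ⟨u, hu₀, hu⟩ := exists_hasDerivWithinAt_Icc_of_norm_le hab hG (fun x ↦ hFt _)
    (L := K * M + B)
    (fun t ht x ↦ (hGgrowth t ht x).trans (by gcongr; exact min_le_right _ _)) x₀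
  have hbound : ∀ t ∈ Icc a b, ‖u t - x₀‖ ≤ M := fun t ht ↦ by
    refine (norm_le_gronwallBound_of_norm_deriv_right_le (f := fun t ↦ u t - x₀)
      (f' := fun t ↦ G t (u t)) (δ := 0) (K := K) (ε := B)
      (fun t ht ↦ (hu t ht).continuousWithinAt.sub_const x₀)
      (fun t ht ↦ ((hu t (Ico_subset_Icc_self ht)).mono_of_mem_nhdsWithin
        (Icc_mem_nhdsGE_of_mem ht)).sub_const x₀) (by simp [hu₀])
      (fun t ht ↦ (hGgrowth t (Ico_subset_Icc_self ht) _).trans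
        (by gcongr; exact min_le_left _ _)) t ht).trans ?_
    exact gronwallBound_mono le_rfl hB₀ K.2 (by linarith [ht.2])
  refine ⟨u, hu₀, fun t ht ↦ ?_⟩
  simpa [G, radialRetraction_of_norm_le (hbound t ht)] using hu t ht

lemma exists_hasDerivWithinAt_Ici_of_lipschitzWith
    (hF : ∀ T, ∃ K : ℝ≥0, ∀ t ∈ Icc a T, LipschitzWith K (F t))
    (hFt : ∀ x, ContinuousOn (F · x) (Ici a)) (x₀ : E) :
    ∃ u : ℝ → E, u a = x₀ ∧ ∀ t ∈ Ici a, HasDerivWithinAt u (F t (u t)) (Ici a) t := by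
  have hsol (n : ℕ) : ∃ u : ℝ → E, u a = x₀ ∧
      ∀ t ∈ Icc a (a + n), HasDerivWithinAt u (F t (u t)) (Icc a (a + n)) t := by
    obtain ⟨K, hK⟩ := hF (a + n)
    exact exists_hasDerivWithinAt_Icc_of_lipschitzWith (by simp) hK
      (fun x ↦ (hFt x).mono Icc_subset_Ici_self) x₀
  choose u hu₀ hu using hsol
  have hcompat {n m : ℕ} (hnm : n ≤ m) : EqOn (u n) (u m) (Icc a (a + n)) := by
    have hsub : Icc a (a + n) ⊆ Icc a (a + m) := Icc_subset_Icc_right (by gcongr)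
    obtain ⟨K, hK⟩ := hF (a + n)
    exact ODE_solution_unique_of_hasDerivWithinAt_Icc hK (hu n)
      (fun t ht ↦ (hu m t (hsub ht)).mono hsub) ((hu₀ n).trans (hu₀ m).symm)
  set N : ℝ → ℕ := fun t ↦ ⌈t - a⌉₊ + 1
  have hN (t : ℝ) : t < a + N t := by
    have := Nat.le_ceil (t - a); push_cast [N]; linarith
  have hglue (n : ℕ) : EqOn (fun t ↦ u (N t) t) (u n) (Icc a (a + n)) := fun t ht ↦ by
    rcases le_total (N t) n with h | h
    · exact hcompat h ⟨ht.1, (hN t).le⟩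
    · exact (hcompat h ht).symm
  refine ⟨fun t ↦ u (N t) t, (hglue 0 ⟨le_rfl, by simp⟩).trans (hu₀ 0), fun t ht ↦ ?_⟩
  have hnhds : Icc a (a + N t) ∈ 𝓝[Ici a] t :=
    inter_mem_nhdsWithin _ (Iic_mem_nhds (hN t))
  refine ((hu (N t) t ⟨ht, (hN t).le⟩).mono_of_mem_nhdsWithin hnhds).congr_of_eventuallyEq
    (eventually_of_mem hnhds (hglue _)) (hglue _ ⟨ht, (hN t).le⟩)

lemma exists_hasDerivAt_Ici_of_lipschitzWith
    (hF : ∀ T, ∃ K : ℝ≥0, ∀ t ∈ Icc a T, LipschitzWith K (F t))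
    (hFt : ∀ x, ContinuousOn (F · x) (Ici a)) (x₀ : E) :
    ∃ u : ℝ → E, u a = x₀ ∧ ∀ t ∈ Ici a, HasDerivAt u (F t (u t)) t := by
  obtain ⟨u, hu₀, hu⟩ := exists_hasDerivWithinAt_Ici_of_lipschitzWith hF hFt x₀
  obtain ⟨w, hwu, hw⟩ := exists_hasDerivAt_of_hasDerivWithinAt_Ici hu
  exact ⟨w, (hwu self_mem_Ici).trans hu₀, fun t ht ↦ by rw [hwu ht]; exact hw t ht⟩

end GlobalSolution

section PDAVD

variable {X Y : Type*} [NormedAddCommGroup X] [InnerProductSpace ℝ X] [CompleteSpace X]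
  [NormedAddCommGroup Y] [InnerProductSpace ℝ Y] [CompleteSpace Y]
  {α β θ : ℝ} {f' : X → X} {A : X →L[ℝ] Y} {b : Y}

variable (α β θ f' A b) in
/-- (PD-AVD) as a first-order system in the state `(x, λ, ẋ, λ̇)`. -/
noncomputable def pdavdField (t : ℝ) (u : X × Y × X × Y) : X × Y × X × Y :=
  (u.2.2.1, u.2.2.2,
    -((α / t) • u.2.2.1) - f' u.1 - (A†) (u.2.1 + (θ * t) • u.2.2.2) - β • (A†) (A u.1 - b),
    -((α / t) • u.2.2.2) + (A (u.1 + (θ * t) • u.2.2.1) - b))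

lemma lipschitzWith_pdavdField {ℓ : ℝ≥0} (hf' : LipschitzWith ℓ f') {t : ℝ} {c d : ℝ≥0}
    (hc : ‖α / t‖₊ ≤ c) (hd : ‖θ * t‖₊ ≤ d) :
    LipschitzWith (max 1 (max (c + ℓ + ‖A†‖₊ * (1 + d) + ‖β‖₊ * (‖A†‖₊ * ‖A‖₊))
      (c + ‖A‖₊ * (1 + d)))) (pdavdField α β θ f' A b t) := by
  have p₁ : LipschitzWith 1 (fun u : X × Y × X × Y ↦ u.1) := LipschitzWith.prod_fst
  have p₂ : LipschitzWith 1 (fun u : X × Y × X × Y ↦ u.2.1) :=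
    (LipschitzWith.prod_fst.comp LipschitzWith.prod_snd).weaken (by simp)
  have p₃ : LipschitzWith 1 (fun u : X × Y × X × Y ↦ u.2.2.1) :=
    (LipschitzWith.prod_fst.comp (LipschitzWith.prod_snd.comp LipschitzWith.prod_snd)).weaken
      (by simp)
  have p₄ : LipschitzWith 1 (fun u : X × Y × X × Y ↦ u.2.2.2) :=
    (LipschitzWith.prod_snd.comp (LipschitzWith.prod_snd.comp LipschitzWith.prod_snd)).weaken
      (by simp)
  have h₃ := ((((lipschitzWith_smul (α / t)).comp p₃).neg.sub (hf'.comp p₁)).sub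
    ((A†).lipschitz.comp (p₂.add ((lipschitzWith_smul (θ * t)).comp p₄)))).sub
    ((lipschitzWith_smul β).comp ((A†).lipschitz.comp ((A.lipschitz.comp p₁).sub
      (LipschitzWith.const b))))
  have h₄ := ((lipschitzWith_smul (α / t)).comp p₄).neg.add
    ((A.lipschitz.comp (p₁.add ((lipschitzWith_smul (θ * t)).comp p₃))).sub
      (LipschitzWith.const b))
  refine (p₃.prodMk (p₄.prodMk (h₃.prodMk h₄))).weaken ?_
  simp only [mul_one, add_zero, ← max_assoc, max_self]
  gcongr

lemma exists_lipschitzWith_pdavdField {ℓ : ℝ≥0} (hf' : LipschitzWith ℓ f') {t₀ : ℝ}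
    (ht₀ : 0 < t₀) (T : ℝ) :
    ∃ K : ℝ≥0, ∀ t ∈ Icc t₀ T, LipschitzWith K (pdavdField α β θ f' A b t) := by
  refine ⟨_, fun t ht ↦ lipschitzWith_pdavdField hf' (c := ‖α / t₀‖₊) (d := ‖θ * T‖₊) ?_ ?_⟩
  · have : ‖α / t‖ ≤ ‖α / t₀‖ := by
      rw [norm_div, norm_div, Real.norm_of_nonneg ht₀.le, Real.norm_of_nonneg (ht₀.le.trans ht.1)]
      exact div_le_div_of_nonneg_left (norm_nonneg α) ht₀ ht.1
    exact_mod_cast this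
  · have : ‖θ * t‖ ≤ ‖θ * T‖ := by
      rw [norm_mul, norm_mul, Real.norm_of_nonneg (ht₀.le.trans ht.1),
        Real.norm_of_nonneg (ht₀.le.trans (ht.1.trans ht.2))]
      gcongr
      exact ht.2
    exact_mod_cast this

lemma continuousOn_pdavdField {t₀ : ℝ} (ht₀ : 0 < t₀) (hf' : Continuous f') {u : ℝ → X × Y × X × Y}
    (hu : ContinuousOn u (Ici t₀)) :
    ContinuousOn (fun t ↦ pdavdField α β θ f' A b t (u t)) (Ici t₀) := by
  have hdiv : ContinuousOn (fun t : ℝ ↦ α / t) (Ici t₀) :=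
    continuousOn_const.div continuousOn_id fun t ht ↦ (ht₀.trans_le ht).ne'
  unfold pdavdField
  fun_prop

lemma isPDAVDSolution_of_hasDerivAt {t₀ : ℝ} (ht₀ : 0 < t₀) (hf' : Continuous f')
    {u : ℝ → X × Y × X × Y}
    (hu : ∀ t ∈ Ici t₀, HasDerivAt u (pdavdField α β θ f' A b t (u t)) t) :
    IsPDAVDSolution t₀ α β θ f' A b (fun t ↦ (u t).1) (fun t ↦ (u t).2.1) (fun t ↦ (u t).2.2.1)
      (fun t ↦ (pdavdField α β θ f' A b t (u t)).2.2.1) (fun t ↦ (u t).2.2.2)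
      (fun t ↦ (pdavdField α β θ f' A b t (u t)).2.2.2) := by
  have hF := continuousOn_pdavdField (α := α) (β := β) (θ := θ) (A := A) (b := b) ht₀ hf'
    (HasDerivAt.continuousOn hu)
  refine ⟨fun t ht ↦ (hu t ht).fst, fun t ht ↦ (hu t ht).snd.snd.fst, hF.snd.snd.fst,
    fun t ht ↦ (hu t ht).snd.fst, fun t ht ↦ (hu t ht).snd.snd.snd, hF.snd.snd.snd,
    fun t _ ↦ ?_, fun t _ ↦ ?_⟩
  · simp only [pdavdField]; abel
  · simp only [pdavdField]; abel

lemma IsPDAVDSolution.hasDerivAt {t₀ : ℝ} {x x' x'' : ℝ → X} {l l' l'' : ℝ → Y}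
    (h : IsPDAVDSolution t₀ α β θ f' A b x l x' x'' l' l'') :
    ∀ t ∈ Ici t₀, HasDerivAt (fun t ↦ (x t, l t, x' t, l' t))
      (pdavdField α β θ f' A b t (x t, l t, x' t, l' t)) t := by
  obtain ⟨hx, hx', -, hl, hl', -, hx'', hl''⟩ := h
  intro t ht
  convert (hx t ht).prodMk ((hl t ht).prodMk ((hx' t ht).prodMk (hl' t ht))) using 1
  simp only [pdavdField, Prod.mk.injEq, true_and]
  constructor
  · rw [eq_comm, ← sub_eq_zero, ← hx'' t ht]; abel
  · rw [eq_comm, ← sub_eq_zero, ← hl'' t ht]; abel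

end PDAVD

theorem stmt7_general
    {X Y : Type*}
    [NormedAddCommGroup X] [InnerProductSpace ℝ X] [CompleteSpace X]
    [NormedAddCommGroup Y] [InnerProductSpace ℝ Y] [CompleteSpace Y]
    (f' : X → X) (A : X →L[ℝ] Y) (b : Y)
    (ℓ : NNReal) (hlip : LipschitzWith ℓ f')
    (t₀ α β θ : ℝ) (ht₀ : 0 < t₀)
    (x₀ : X) (lam₀ : Y) (xd₀ : X) (lamd₀ : Y) :
    ∃ x : ℝ → X, ∃ l : ℝ → Y, ∃ x' x'' : ℝ → X, ∃ l' l'' : ℝ → Y,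
      IsPDAVDSolution t₀ α β θ f' A b x l x' x'' l' l'' ∧
      x t₀ = x₀ ∧ l t₀ = lam₀ ∧ x' t₀ = xd₀ ∧ l' t₀ = lamd₀ ∧
      ∀ (y : ℝ → X) (m : ℝ → Y) (y' y'' : ℝ → X) (m' m'' : ℝ → Y),
        IsPDAVDSolution t₀ α β θ f' A b y m y' y'' m' m'' →
        y t₀ = x₀ → m t₀ = lam₀ → y' t₀ = xd₀ → m' t₀ = lamd₀ →
        ∀ t ∈ Ici t₀, y t = x t ∧ m t = l t := by
  have hF := exists_lipschitzWith_pdavdField (α := α) (β := β) (θ := θ) (A := A) (b := b) hlip ht₀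
  obtain ⟨u, hu₀, hu⟩ := exists_hasDerivAt_Ici_of_lipschitzWith hF
    (fun _ ↦ continuousOn_pdavdField ht₀ hlip.continuous continuousOn_const)
    (x₀, lam₀, xd₀, lamd₀)
  refine ⟨_, _, _, _, _, _, isPDAVDSolution_of_hasDerivAt ht₀ hlip.continuous hu,
    by simp [hu₀], by simp [hu₀], by simp [hu₀], by simp [hu₀], ?_⟩
  intro y m y' y'' m' m'' hsol hy hm hy' hm' t ht
  obtain ⟨K, hK⟩ := hF t
  have := ODE_solution_unique_of_hasDerivWithinAt_Icc hK
    (fun s hs ↦ (hsol.hasDerivAt s hs.1).hasDerivWithinAt)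
    (fun s hs ↦ (hu s hs.1).hasDerivWithinAt) (by simp [hu₀, hy, hm, hy', hm'])
    ⟨ht, le_rfl⟩
  exact ⟨congrArg Prod.fst this, congrArg (·.2.1) this⟩

theorem stmt7
    {X Y : Type*}
    [NormedAddCommGroup X] [InnerProductSpace ℝ X] [CompleteSpace X]
    [NormedAddCommGroup Y] [InnerProductSpace ℝ Y] [CompleteSpace Y]
    (f : X → ℝ) (f' : X → X) (A : X →L[ℝ] Y) (b : Y)
    (hconv : ConvexOn ℝ univ f)
    (hgrad : ∀ u, HasGradientAt f (f' u) u)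
    (ℓ : NNReal) (hℓ : 0 < ℓ) (hlip : LipschitzWith ℓ f')
    (t₀ α β θ : ℝ) (ht₀ : 0 < t₀) (hα : 3 < α) (hβ : 0 ≤ β)
    (hθ1 : 1 / (α - 1) < θ) (hθ2 : θ < 1 / 2)
    (hsol : ∃ xs : X, ∃ ls : Y,
      f' xs + (ContinuousLinearMap.adjoint A) ls = 0 ∧ A xs = b)
    (x₀ : X) (lam₀ : Y) (xd₀ : X) (lamd₀ : Y) :
    ∃ x : ℝ → X, ∃ l : ℝ → Y, ∃ x' x'' : ℝ → X, ∃ l' l'' : ℝ → Y,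
      IsPDAVDSolution t₀ α β θ f' A b x l x' x'' l' l'' ∧
      x t₀ = x₀ ∧ l t₀ = lam₀ ∧ x' t₀ = xd₀ ∧ l' t₀ = lamd₀ ∧
      ∀ (y : ℝ → X) (m : ℝ → Y) (y' y'' : ℝ → X) (m' m'' : ℝ → Y),
        IsPDAVDSolution t₀ α β θ f' A b y m y' y'' m' m'' →
        y t₀ = x₀ → m t₀ = lam₀ → y' t₀ = xd₀ → m' t₀ = lamd₀ →
        ∀ t ∈ Ici t₀, y t = x t ∧ m t = l t :=
  stmt7_general f' A b ℓ hlip t₀ α β θ ht₀ x₀ lam₀ xd₀ lamd₀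
end

section
/- Assume additionally that ∇f is ℓ-Lipschitz continuous for some ℓ > 0, that α > 3 and 1/2 > θ > 1/(α−1). Let (x,λ) be a solution of (PD-AVD) and (x*,λ*) a primal-dual optimal solution. Then for every t ≥ t₀: (α/t)·(d/dt)‖(ẋ(t),λ̇(t))‖² + θ·(d/dt)(t·‖A*(λ(t) − λ*)‖²) + (1 − θ)·‖A*(λ(t) − λ*)‖² + 2·⟨ẍ(t) + (α/t)ẋ(t), A*(λ(t) − λ*)⟩ ≤ 2‖∇f(x(t)) − ∇f(x*)‖² + (2β²‖A‖² + 1)·‖Ax(t) − b‖², where ‖A‖ is the operator norm of A. -/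
/-!
Write `v = A*(λ - λ*)`, `w = Ax - b` and `g = ∇f(x) - ∇f(x*) + β A*w`. Using
`∇f(x*) = -A*λ*`, the two equations of (PD-AVD) read
`ẍ + (α/t)ẋ + g + v + θt A*λ̇ = 0` and `λ̈ + (α/t)λ̇ - w - θt Aẋ = 0`.
Substituting them into the left-hand side, the coupling terms `θt ⟪ẋ, A*λ̇⟫ = θt ⟪λ̇, Aẋ⟫`
cancel, and completing squares leaves `‖g‖² + ‖w‖²` minus three squares. Finally
`‖g‖² ≤ 2‖∇f(x) - ∇f(x*)‖² + 2β²‖A‖²‖w‖²`.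
-/

open Set MeasureTheory Filter Topology Asymptotics
open scoped RealInnerProductSpace ENNReal

section

variable {X Y : Type*} [NormedAddCommGroup X] [InnerProductSpace ℝ X] [CompleteSpace X]
  [NormedAddCommGroup Y] [InnerProductSpace ℝ Y] [CompleteSpace Y]

open ContinuousLinearMap in
theorem pdAVD_dissipation_identity (A : X →L[ℝ] Y) (c θ t : ℝ) (u u' g v : X) (m m' w : Y)
    (hu : u' + c • u + g + v + (θ * t) • adjoint A m = 0)
    (hm : m' + c • m - w - (θ * t) • A u = 0) :
    c * (2 * ⟪u, u'⟫ + 2 * ⟪m, m'⟫) + θ * (1 * ‖v‖ ^ 2 + t * (2 * ⟪v, adjoint A m⟫))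
        + (1 - θ) * ‖v‖ ^ 2 + 2 * ⟪u' + c • u, v⟫
      = ‖g‖ ^ 2 + ‖w‖ ^ 2 - ‖c • u + g + v‖ ^ 2 - ‖c • m - w‖ ^ 2
        - c ^ 2 * (‖u‖ ^ 2 + ‖m‖ ^ 2) := by
  obtain rfl : u' = -(c • u + g + v + (θ * t) • adjoint A m) := by
    linear_combination (norm := module) hu
  obtain rfl : m' = w + (θ * t) • A u - c • m := by
    linear_combination (norm := module) hm
  have hadj : ⟪u, adjoint A m⟫ = ⟪m, A u⟫ := by
    rw [adjoint_inner_right, real_inner_comm]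
  simp only [inner_add_left, inner_add_right, inner_sub_right, inner_neg_right, inner_neg_left,
    real_inner_smul_left, real_inner_smul_right, norm_add_sq_real, norm_sub_sq_real, norm_smul,
    mul_pow, Real.norm_eq_abs, sq_abs, hadj, real_inner_self_eq_norm_sq]
  rw [real_inner_comm (adjoint A m) v]
  ring

theorem norm_add_smul_adjoint_sq_le (A : X →L[ℝ] Y) (β : ℝ) (p : X) (w : Y) :
    ‖p + β • ContinuousLinearMap.adjoint A w‖ ^ 2
      ≤ 2 * ‖p‖ ^ 2 + 2 * β ^ 2 * ‖A‖ ^ 2 * ‖w‖ ^ 2 := by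
  have hAw : ‖ContinuousLinearMap.adjoint A w‖ ≤ ‖A‖ * ‖w‖ := by
    simpa only [LinearIsometryEquiv.norm_map] using (ContinuousLinearMap.adjoint A).le_opNorm w
  calc ‖p + β • ContinuousLinearMap.adjoint A w‖ ^ 2
      ≤ (‖p‖ + |β| * ‖ContinuousLinearMap.adjoint A w‖) ^ 2 := by
        gcongr
        simpa only [norm_smul, Real.norm_eq_abs] using norm_add_le p (β • ContinuousLinearMap.adjoint A w)
    _ ≤ (‖p‖ + |β| * (‖A‖ * ‖w‖)) ^ 2 := by gcongr
    _ ≤ 2 * (‖p‖ ^ 2 + (|β| * (‖A‖ * ‖w‖)) ^ 2) := add_sq_le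
    _ = 2 * ‖p‖ ^ 2 + 2 * β ^ 2 * ‖A‖ ^ 2 * ‖w‖ ^ 2 := by rw [mul_pow, mul_pow, sq_abs]; ring

end

theorem stmt11_general
    {X Y : Type*}
    [NormedAddCommGroup X] [InnerProductSpace ℝ X] [CompleteSpace X]
    [NormedAddCommGroup Y] [InnerProductSpace ℝ Y] [CompleteSpace Y]
    (f' : X → X) (A : X →L[ℝ] Y) (b : Y)
    (t₀ α β θ : ℝ)
    (x : ℝ → X) (x' x'' : ℝ → X) (l : ℝ → Y) (l' l'' : ℝ → Y)
    (hx2 : ∀ t ∈ Ici t₀, HasDerivAt x' (x'' t) t)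
    (hl1 : ∀ t ∈ Ici t₀, HasDerivAt l (l' t) t)
    (hl2 : ∀ t ∈ Ici t₀, HasDerivAt l' (l'' t) t)
    (hode1 : ∀ t ∈ Ici t₀, x'' t + (α / t) • x' t + f' (x t)
        + (ContinuousLinearMap.adjoint A) (l t + (θ * t) • l' t)
        + β • (ContinuousLinearMap.adjoint A) (A (x t) - b) = 0)
    (hode2 : ∀ t ∈ Ici t₀, l'' t + (α / t) • l' t
        - (A (x t + (θ * t) • x' t) - b) = 0)
    (xs : X) (ls : Y)
    (hopt1 : f' xs + (ContinuousLinearMap.adjoint A) ls = 0)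
    :
    ∀ t ∈ Ici t₀, ∃ du dw : ℝ,
      HasDerivAt (fun s => ‖x' s‖ ^ 2 + ‖l' s‖ ^ 2) du t ∧
      HasDerivAt (fun s => s * ‖(ContinuousLinearMap.adjoint A) (l s - ls)‖ ^ 2) dw t ∧
      α / t * du + θ * dw
          + (1 - θ) * ‖(ContinuousLinearMap.adjoint A) (l t - ls)‖ ^ 2
          + 2 * ⟪x'' t + (α / t) • x' t,
              (ContinuousLinearMap.adjoint A) (l t - ls)⟫
        ≤ 2 * ‖f' (x t) - f' xs‖ ^ 2
          + (2 * β ^ 2 * ‖A‖ ^ 2 + 1) * ‖A (x t) - b‖ ^ 2 := by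
  intro t ht
  set B := ContinuousLinearMap.adjoint A
  have hv : HasDerivAt (fun s => B (l s - ls)) (B (l' t)) t :=
    B.hasFDerivAt.comp_hasDerivAt t ((hl1 t ht).sub_const ls)
  refine ⟨_, _, (hx2 t ht).norm_sq.add (hl2 t ht).norm_sq, (hasDerivAt_id' t).mul hv.norm_sq, ?_⟩
  have hx : x'' t + (α / t) • x' t + (f' (x t) - f' xs + β • B (A (x t) - b)) + B (l t - ls)
      + (θ * t) • B (l' t) = 0 := by
    have h := hode1 t ht
    rw [map_add, map_smul] at h
    rw [map_sub B (l t) ls]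
    linear_combination (norm := module) h - hopt1
  have hl : l'' t + (α / t) • l' t - (A (x t) - b) - (θ * t) • A (x' t) = 0 := by
    have h := hode2 t ht
    rw [map_add, map_smul] at h
    linear_combination (norm := module) h
  have key := pdAVD_dissipation_identity A (α / t) θ t _ _ _ _ _ _ _ hx hl
  have hg := norm_add_smul_adjoint_sq_le A β (f' (x t) - f' xs) (A (x t) - b)
  nlinarith [key, hg, sq_nonneg (α / t)]

theorem stmt11
    {X Y : Type*}
    [NormedAddCommGroup X] [InnerProductSpace ℝ X] [CompleteSpace X]
    [NormedAddCommGroup Y] [InnerProductSpace ℝ Y] [CompleteSpace Y]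
    (f : X → ℝ) (f' : X → X) (A : X →L[ℝ] Y) (b : Y)
    (hconv : ConvexOn ℝ univ f)
    (hgrad : ∀ u, HasGradientAt f (f' u) u)
    (hf'cont : Continuous f')
    (ℓ : NNReal) (hℓ : 0 < ℓ) (hlip : LipschitzWith ℓ f')
    (t₀ α β θ : ℝ) (ht₀ : 0 < t₀) (hα : 3 < α) (hβ : 0 ≤ β)
    (hθ1 : 1 / (α - 1) < θ) (hθ2 : θ < 1 / 2)
    (x : ℝ → X) (x' x'' : ℝ → X) (l : ℝ → Y) (l' l'' : ℝ → Y)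
    (hx1 : ∀ t ∈ Ici t₀, HasDerivAt x (x' t) t)
    (hx2 : ∀ t ∈ Ici t₀, HasDerivAt x' (x'' t) t)
    (hx3 : ContinuousOn x'' (Ici t₀))
    (hl1 : ∀ t ∈ Ici t₀, HasDerivAt l (l' t) t)
    (hl2 : ∀ t ∈ Ici t₀, HasDerivAt l' (l'' t) t)
    (hl3 : ContinuousOn l'' (Ici t₀))
    (hode1 : ∀ t ∈ Ici t₀, x'' t + (α / t) • x' t + f' (x t)
        + (ContinuousLinearMap.adjoint A) (l t + (θ * t) • l' t)
        + β • (ContinuousLinearMap.adjoint A) (A (x t) - b) = 0)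
    (hode2 : ∀ t ∈ Ici t₀, l'' t + (α / t) • l' t
        - (A (x t + (θ * t) • x' t) - b) = 0)
    (xs : X) (ls : Y)
    (hopt1 : f' xs + (ContinuousLinearMap.adjoint A) ls = 0)
    (hopt2 : A xs = b)
    :
    ∀ t ∈ Ici t₀, ∃ du dw : ℝ,
      HasDerivAt (fun s => ‖x' s‖ ^ 2 + ‖l' s‖ ^ 2) du t ∧
      HasDerivAt (fun s => s * ‖(ContinuousLinearMap.adjoint A) (l s - ls)‖ ^ 2) dw t ∧
      α / t * du + θ * dw
          + (1 - θ) * ‖(ContinuousLinearMap.adjoint A) (l t - ls)‖ ^ 2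
          + 2 * ⟪x'' t + (α / t) • x' t,
              (ContinuousLinearMap.adjoint A) (l t - ls)⟫
        ≤ 2 * ‖f' (x t) - f' xs‖ ^ 2
          + (2 * β ^ 2 * ‖A‖ ^ 2 + 1) * ‖A (x t) - b‖ ^ 2 :=
  stmt11_general f' A b t₀ α β θ x x' x'' l l' l'' hx2 hl1 hl2 hode1 hode2 xs ls hopt1
end

section
/- Let δ > 0, 1 ≤ p < ∞ and 1 ≤ q ≤ ∞. Suppose F : [δ,∞) → [0,∞) is a locally absolutely continuous nonnegative function with F ∈ L^p([δ,∞)), that G ∈ L^q([δ,∞)), and that F'(t) ≤ G(t) for almost every t ≥ δ. Then lim_{t→∞} F(t) = 0. -/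
open Set MeasureTheory Filter Topology
open scoped ENNReal

/-!
Since `q ≥ 1`, Hölder's inequality and the absolute continuity of the `L^q` norm make the
`L¹` mass of `G` on intervals of length `η` uniformly small, so `F` can rise by at most
`ε / 2` over such an interval. Hence `F t ≥ ε` forces `F ≥ ε / 2` on `[t - η, t]`, and
`∫_{t-η}^t |F|^p ≥ η (ε / 2)^p`. Because `|F|^p` is integrable, these integrals tend to `0`,
so `F t < ε` for all large `t`.
-/

section UniformSmallness

variable {α E : Type*} [MeasurableSpace α] {μ : Measure α} [NormedAddCommGroup E]
  {q : ℝ≥0∞} {G : α → E}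

theorem MeasureTheory.MemLp.exists_eLpNorm_one_restrict_le (hq : 1 ≤ q) (hG : MemLp G q μ)
    {ε : ℝ} (hε : 0 < ε) :
    ∃ η > 0, ∀ s, MeasurableSet s → μ s ≤ ENNReal.ofReal η →
      eLpNorm G 1 (μ.restrict s) ≤ ENNReal.ofReal ε := by
  have holder : ∀ s, eLpNorm G 1 (μ.restrict s) ≤
      eLpNorm G q (μ.restrict s) * μ s ^ (1 - 1 / q.toReal) := fun s => by
    simpa [Measure.restrict_apply_univ] using
      eLpNorm_le_eLpNorm_mul_rpow_measure_univ hq hG.1.restrict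
  obtain rfl | hq_top := eq_or_ne q ∞
  · set K := (eLpNorm G ∞ μ).toReal
    refine ⟨ε / (K + 1), by positivity, fun s _ hμs => ?_⟩
    calc eLpNorm G 1 (μ.restrict s) ≤ eLpNorm G ∞ μ * μ s := by
          simpa using (holder s).trans
            (mul_le_mul_left (eLpNorm_mono_measure _ Measure.restrict_le_self) _)
      _ ≤ ENNReal.ofReal K * ENNReal.ofReal (ε / (K + 1)) := by
          rw [ENNReal.ofReal_toReal hG.2.ne]; gcongr
      _ ≤ ENNReal.ofReal ε := by
          rw [← ENNReal.ofReal_mul (by positivity)]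
          refine ENNReal.ofReal_le_ofReal ?_
          rw [mul_div_assoc', div_le_iff₀ (by positivity)]
          nlinarith
  · obtain ⟨η, hη, hind⟩ := hG.eLpNorm_indicator_le hq hq_top hε
    refine ⟨min η 1, by positivity, fun s hs hμs => ?_⟩
    have hexp : 0 ≤ 1 - 1 / q.toReal := by
      have : 1 ≤ q.toReal := by simpa using ENNReal.toReal_mono hq_top hq
      rw [sub_nonneg, div_le_one (by linarith)]
      exact this
    calc eLpNorm G 1 (μ.restrict s) ≤ ENNReal.ofReal ε * 1 := by
          refine (holder s).trans (mul_le_mul' ?_ ?_)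
          · rw [← eLpNorm_indicator_eq_eLpNorm_restrict hs]
            exact hind s hs (hμs.trans (ENNReal.ofReal_le_ofReal (min_le_left _ _)))
          · refine ENNReal.rpow_le_one (hμs.trans ?_) hexp
            simp
      _ = ENNReal.ofReal ε := mul_one _

theorem MeasureTheory.MemLp.exists_integrableOn_integral_norm_le (hq : 1 ≤ q)
    (hG : MemLp G q μ) {ε : ℝ} (hε : 0 < ε) :
    ∃ η > 0, ∀ s, MeasurableSet s → μ s ≤ ENNReal.ofReal η →
      IntegrableOn G s μ ∧ ∫ x in s, ‖G x‖ ∂μ ≤ ε := by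
  obtain ⟨η, hη, hsmall⟩ := hG.exists_eLpNorm_one_restrict_le hq hε
  refine ⟨η, hη, fun s hs hμs => ?_⟩
  have hGs : IntegrableOn G s μ := memLp_one_iff_integrable.mp
    ⟨hG.1.restrict, (hsmall s hs hμs).trans_lt ENNReal.ofReal_lt_top⟩
  refine ⟨hGs, ?_⟩
  rw [integral_norm_eq_lintegral_enorm hGs.1, ← eLpNorm_one_eq_lintegral_enorm]
  exact ENNReal.toReal_le_of_le_ofReal hε.le (hsmall s hs hμs)

end UniformSmallness

theorem sub_le_integral_Ioc_of_ae_le {a s t : ℝ} {F G F' : ℝ → ℝ}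
    (hFac : ∀ t ∈ Ici a, IntervalIntegrable F' volume a t ∧ F t = F a + ∫ s in a..t, F' s)
    (hF'le : ∀ᵐ t ∂(volume.restrict (Ici a)), F' t ≤ G t)
    (has : a ≤ s) (hst : s ≤ t) (hG : IntegrableOn G (Ioc s t)) :
    F t - F s ≤ ∫ x in Ioc s t, G x := by
  obtain ⟨hIs, hFs⟩ := hFac s has
  obtain ⟨hIt, hFt⟩ := hFac t (has.trans hst)
  have hII : IntervalIntegrable F' volume s t := hIs.symm.trans hIt
  calc F t - F s = ∫ x in s..t, F' x := by
        rw [hFt, hFs, ← intervalIntegral.integral_add_adjacent_intervals hIs hII]; ring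
    _ = ∫ x in Ioc s t, F' x := intervalIntegral.integral_of_le hst
    _ ≤ ∫ x in Ioc s t, G x :=
        setIntegral_mono_ae_restrict ((intervalIntegrable_iff_integrableOn_Ioc_of_le hst).mp hII)
          hG (ae_restrict_of_ae_restrict_of_subset (fun x hx => has.trans hx.1.le) hF'le)

theorem exists_forall_sub_le_of_ae_le_memLp {a ε : ℝ} {q : ℝ≥0∞} {F G F' : ℝ → ℝ}
    (hFac : ∀ t ∈ Ici a, IntervalIntegrable F' volume a t ∧ F t = F a + ∫ s in a..t, F' s)
    (hF'le : ∀ᵐ t ∂(volume.restrict (Ici a)), F' t ≤ G t)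
    (hq : 1 ≤ q) (hG : MemLp G q (volume.restrict (Ici a))) (hε : 0 < ε) :
    ∃ η > 0, ∀ s t, a ≤ s → s ≤ t → t - s ≤ η → F t - F s ≤ ε := by
  obtain ⟨η, hη, hsmall⟩ := hG.exists_integrableOn_integral_norm_le hq hε
  refine ⟨η, hη, fun s t has hst hts => ?_⟩
  have hμ : volume.restrict (Ici a) (Ioc s t) ≤ ENNReal.ofReal η :=
    (Measure.restrict_apply_le _ _).trans
      (by rw [Real.volume_Ioc]; exact ENNReal.ofReal_le_ofReal hts)
  obtain ⟨hGi, hGε⟩ := hsmall (Ioc s t) measurableSet_Ioc hμ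
  have hsub : Ioc s t ⊆ Ici a := fun y hy => has.trans hy.1.le
  rw [IntegrableOn, Measure.restrict_restrict_of_subset hsub] at hGi
  rw [Measure.restrict_restrict_of_subset hsub] at hGε
  calc F t - F s ≤ ∫ x in Ioc s t, G x := sub_le_integral_Ioc_of_ae_le hFac hF'le has hst hGi
    _ ≤ ∫ x in Ioc s t, ‖G x‖ :=
        setIntegral_mono hGi hGi.norm fun y => Real.le_norm_self (G y)
    _ ≤ ε := hGε

theorem MeasureTheory.IntegrableOn.tendsto_integral_Ioc_sub_atTop {f : ℝ → ℝ} {a η : ℝ}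
    (hf : IntegrableOn f (Ioi a)) (hη : 0 ≤ η) :
    Tendsto (fun t => ∫ x in Ioc (t - η) t, f x) atTop (𝓝 0) := by
  have hlim := intervalIntegral_tendsto_integral_Ioi a hf tendsto_id
  have hlim' := intervalIntegral_tendsto_integral_Ioi a hf
    (tendsto_atTop_add_const_right _ (-η) tendsto_id)
  rw [← sub_self (∫ x in Ioi a, f x)]
  refine (hlim.sub hlim').congr' ?_
  filter_upwards [eventually_ge_atTop (a + η)] with t ht
  have hint : ∀ b, a ≤ b → IntervalIntegrable f volume a b := fun b hb =>
    (intervalIntegrable_iff_integrableOn_Ioc_of_le hb).mpr (hf.mono_set Ioc_subset_Ioi_self)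
  rw [id, ← sub_eq_add_neg, intervalIntegral.integral_interval_sub_left (hint t (by linarith))
    (hint _ (by linarith)), intervalIntegral.integral_of_le (by linarith)]

theorem stmt16_general (δ : ℝ) (p q : ℝ≥0∞)
    (hp1 : 1 ≤ p) (hp2 : p ≠ ⊤) (hq1 : 1 ≤ q)
    (F G F' : ℝ → ℝ)
    (hFnonneg : ∀ t ∈ Ici δ, 0 ≤ F t)
    -- `F` is locally absolutely continuous on `[δ,∞)` with a.e. derivative `F'`:
    -- it is the integral of the locally integrable function `F'`
    (hFac : ∀ t ∈ Ici δ, IntervalIntegrable F' volume δ t ∧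
      F t = F δ + ∫ s in δ..t, F' s)
    (hF'le : ∀ᵐ t ∂(volume.restrict (Ici δ)), F' t ≤ G t)
    (hFp : MemLp F p (volume.restrict (Ici δ)))
    (hGq : MemLp G q (volume.restrict (Ici δ))) :
    Tendsto F atTop (nhds 0) := by
  have hf : IntegrableOn (fun x => |F x| ^ p.toReal) (Ioi δ) := by
    have h := hFp.integrable_norm_rpow (zero_lt_one.trans_le hp1).ne' hp2
    simp only [Real.norm_eq_abs] at h
    exact IntegrableOn.mono_set h Ioi_subset_Ici_self
  rw [Metric.tendsto_nhds]
  intro ε hε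
  obtain ⟨η, hη, hrise⟩ :=
    exists_forall_sub_le_of_ae_le_memLp hFac hF'le hq1 hGq (half_pos hε)
  filter_upwards [(hf.tendsto_integral_Ioc_sub_atTop hη.le).eventually_lt_const
    (by positivity : 0 < (ε / 2) ^ p.toReal * η), eventually_ge_atTop (δ + η)]
    with t hsmall ht
  rw [Real.dist_eq, sub_zero, abs_of_nonneg (hFnonneg t (show δ ≤ t by linarith))]
  by_contra! hFt
  have hlow : ∀ x ∈ Ioc (t - η) t, ε / 2 ≤ F x := fun x hx => by
    linarith [hrise x t (by linarith [hx.1]) hx.2 (by linarith [hx.1])]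
  have hbig := setIntegral_ge_of_const_le_real measurableSet_Ioc measure_Ioc_lt_top.ne
    (fun x hx => Real.rpow_le_rpow (by positivity) ((hlow x hx).trans (le_abs_self _))
      ENNReal.toReal_nonneg) (hf.mono_set fun x hx => (by linarith [hx.1] : δ < x))
  rw [Real.volume_real_Ioc_of_le (by linarith), sub_sub_cancel] at hbig
  linarith

theorem stmt16 (δ : ℝ) (hδ : 0 < δ) (p q : ℝ≥0∞)
    (hp1 : 1 ≤ p) (hp2 : p ≠ ⊤) (hq1 : 1 ≤ q)
    (F G F' : ℝ → ℝ)
    (hFnonneg : ∀ t ∈ Ici δ, 0 ≤ F t)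
    -- `F` is locally absolutely continuous on `[δ,∞)` with a.e. derivative `F'`:
    -- it is the integral of the locally integrable function `F'`
    (hFac : ∀ t ∈ Ici δ, IntervalIntegrable F' volume δ t ∧
      F t = F δ + ∫ s in δ..t, F' s)
    (hF'le : ∀ᵐ t ∂(volume.restrict (Ici δ)), F' t ≤ G t)
    (hFp : MemLp F p (volume.restrict (Ici δ)))
    (hGq : MemLp G q (volume.restrict (Ici δ))) :
    Tendsto F atTop (nhds 0) :=
  stmt16_general δ p q hp1 hp2 hq1 F G F' hFnonneg hFac hF'le hFp hGq
end
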